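/- Let c ∈ ℝ and define f : ℝ → ℝ by f(x) = c(4 − 3x) / ((2 + x)²(3 − x)²). Then for every x ∈ [0, 1], f is differentiable at x and its derivative satisfies f′(x) = −2 f(x)/(2 + x) − f(1 − x)/(3 − x). -/

import Mathlib

/-!
Both sides are rational functions with denominator `((2 + x)(3 - x))³`: the reflection
`x ↦ 1 - x` swaps the factors `2 + x` and `3 - x`, so `f (1 - x)` has the same denominator
`(2 + x)²(3 - x)²` as `f x`. Comparing numerators reduces the claim to the polynomial identity
`-3(2 + x)(3 - x) - 2(4 - 3x)(1 - 2x) = -2(4 - 3x)(3 - x) - (1 + 3x)(2 + x)`.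
-/

open Set

noncomputable def stationaryDensity (c x : ℝ) : ℝ :=
  c * (4 - 3 * x) / ((2 + x) ^ 2 * (3 - x) ^ 2)

theorem hasDerivAt_stationaryDensity (c : ℝ) {x : ℝ} (h2 : 2 + x ≠ 0) (h3 : 3 - x ≠ 0) :
    HasDerivAt (stationaryDensity c)
      (c * (-26 + 19 * x - 9 * x ^ 2) / ((2 + x) ^ 3 * (3 - x) ^ 3)) x := by
  have hnum : HasDerivAt (fun x : ℝ => c * (4 - 3 * x)) (c * -(3 * 1)) x :=
    (((hasDerivAt_id x).const_mul 3).const_sub 4).const_mul c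
  have hden : HasDerivAt (fun x : ℝ => (2 + x) ^ 2 * (3 - x) ^ 2)
      (2 * (2 + x) ^ 1 * 1 * (3 - x) ^ 2 + (2 + x) ^ 2 * (2 * (3 - x) ^ 1 * -1)) x :=
    (((hasDerivAt_id x).const_add 2).pow 2).mul (((hasDerivAt_id x).const_sub 3).pow 2)
  refine (hnum.div hden (by positivity)).congr_deriv ?_
  field_simp
  ring

theorem stationaryDensity_reflect_eq (c x : ℝ) (h2 : 2 + x ≠ 0) (h3 : 3 - x ≠ 0) :
    -2 * stationaryDensity c x / (2 + x) - stationaryDensity c (1 - x) / (3 - x) =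
      c * (-26 + 19 * x - 9 * x ^ 2) / ((2 + x) ^ 3 * (3 - x) ^ 3) := by
  unfold stationaryDensity
  have hswap2 : 2 + (1 - x) = 3 - x := by ring
  have hswap3 : 3 - (1 - x) = 2 + x := by ring
  rw [hswap2, hswap3]
  field_simp
  ring

theorem deriv_stationary_density (c : ℝ) (f : ℝ → ℝ)
    (hf : ∀ x : ℝ, f x = c * (4 - 3 * x) / ((2 + x) ^ 2 * (3 - x) ^ 2)) :
    ∀ x ∈ Icc (0 : ℝ) 1,
      HasDerivAt f (-2 * f x / (2 + x) - f (1 - x) / (3 - x)) x := by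
  obtain rfl : f = stationaryDensity c := funext hf
  rintro x ⟨hx0, hx1⟩
  have h2 : 2 + x ≠ 0 := by positivity
  have h3 : 3 - x ≠ 0 := by linarith
  rw [stationaryDensity_reflect_eq c x h2 h3]
  exact hasDerivAt_stationaryDensity c h2 h3
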